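/- arXiv:2203.16426 — 2 statements merged into one kernel-verified Lean document; each statement's English description precedes it below -/
import Mathlib

section
/- With the setup of the appendix, for every φ ∈ ℝ: u_Lᵀ·Ω_R·R_R(π+φ)·R_L(π+φ)·u_R = 4 r² (1-r²) sin φ · (cos φ + (2r² - 1)(1 + cos φ)), and the same formula holds for u_Lᵀ·R_R(π+φ)·R_L(π+φ)·Ω_L·u_R. -/
/-!
A skew 3×3 matrix with unit axial vector satisfies `Ω³ = -Ω`, so the odd powers of `Ω` are `±Ω`,
the even positive ones are `±Ω²`, and the exponential series splits into the sine and cosine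
series: `exp (θ Ω) = 1 + sin θ Ω + (1 - cos θ) Ω²` (Euler–Rodrigues). At `θ = π + φ` this is
`1 - sin φ Ω + (1 + cos φ) Ω²`, and both bilinear forms become polynomials in `r`, `k_x`, `sin φ`,
`cos φ` that agree modulo `k_x² = 1 - r²`.
-/

open Matrix Real

section PowThreeEqNeg

variable {R A : Type*} [CommRing R] [Ring A] [Algebra R A] {a : A}

theorem pow_two_mul_add_one_of_pow_three_eq_neg (h : a ^ 3 = -a) (k : ℕ) :
    a ^ (2 * k + 1) = ((-1 : R) ^ k) • a := by
  induction k with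
  | zero => simp
  | succ k ih =>
    rw [show 2 * (k + 1) + 1 = 2 + (2 * k + 1) by ring, pow_add, ih, mul_smul_comm, ← pow_succ, h,
      pow_succ]
    module

-- The factor `0 ^ k` picks out the exceptional term `a ^ 0 = 1`.
theorem pow_two_mul_of_pow_three_eq_neg (h : a ^ 3 = -a) (k : ℕ) :
    a ^ (2 * k) = (0 : R) ^ k • (1 + a ^ 2) - ((-1 : R) ^ k) • a ^ 2 := by
  cases k with
  | zero => simp
  | succ k =>
    rw [mul_add_one, pow_succ, pow_two_mul_add_one_of_pow_three_eq_neg (R := R) h, smul_mul_assoc,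
      ← pow_two, zero_pow k.succ_ne_zero, pow_succ]
    module

end PowThreeEqNeg

section EulerRodrigues

variable {A : Type*} [Ring A] [Algebra ℝ A] [TopologicalSpace A] [IsTopologicalRing A]
  [ContinuousSMul ℝ A] [T2Space A] {a : A}

open Nat in
theorem NormedSpace.exp_smul_of_pow_three_eq_neg (h : a ^ 3 = -a) (θ : ℝ) :
    NormedSpace.exp (θ • a) = 1 + sin θ • a + (1 - cos θ) • a ^ 2 := by
  have heven : HasSum (fun k => (θ ^ (2 * k) / (2 * k)!) • a ^ (2 * k))
      (1 + (1 - cos θ) • a ^ 2) := by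
    have hfirst : HasSum (fun k => θ ^ (2 * k) / (2 * k)! * (0 : ℝ) ^ k) 1 := by
      convert hasSum_single (f := fun k => θ ^ (2 * k) / (2 * k)! * (0 : ℝ) ^ k) 0
        (fun k hk => by simp [hk]) using 1
      simp
    convert (hfirst.smul_const (1 + a ^ 2)).sub ((hasSum_cos θ).smul_const (a ^ 2)) using 1
    · rfl
    · funext k
      rw [pow_two_mul_of_pow_three_eq_neg (R := ℝ) h]
      module
    · module
  have hodd : HasSum (fun k => (θ ^ (2 * k + 1) / (2 * k + 1)!) • a ^ (2 * k + 1))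
      (sin θ • a) := by
    convert (hasSum_sin θ).smul_const a using 2 with k
    rw [pow_two_mul_add_one_of_pow_three_eq_neg (R := ℝ) h]
    module
  have hterm (n : ℕ) : ((n ! : ℝ)⁻¹) • (θ • a) ^ n = (θ ^ n / n !) • a ^ n := by
    rw [smul_pow, smul_smul, div_eq_inv_mul]
  rw [NormedSpace.exp_eq_tsum ℝ]
  dsimp only
  simp only [hterm]
  rw [show (1 : A) + sin θ • a + (1 - cos θ) • a ^ 2 = 1 + (1 - cos θ) • a ^ 2 + sin θ • a by abel]
  exact (HasSum.even_add_odd (f := fun n => (θ ^ n / n !) • a ^ n) heven hodd).tsum_eq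

theorem NormedSpace.exp_pi_add_smul_of_pow_three_eq_neg (h : a ^ 3 = -a) (φ : ℝ) :
    NormedSpace.exp ((π + φ) • a) = 1 - sin φ • a + (1 + cos φ) • a ^ 2 := by
  rw [exp_smul_of_pow_three_eq_neg h, add_comm π, sin_add_pi, cos_add_pi, neg_smul,
    sub_neg_eq_add, ← sub_eq_add_neg]

end EulerRodrigues

theorem Matrix.skew_pow_three {R : Type*} [CommRing R] (a b c : R) :
    !![0, a, b; -a, 0, c; -b, -c, 0] ^ 3 =
      -(a ^ 2 + b ^ 2 + c ^ 2) • !![0, a, b; -a, 0, c; -b, -c, 0] := by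
  ext i j
  fin_cases i <;> fin_cases j <;> simp [pow_three, Matrix.mul_apply, Fin.sum_univ_three] <;> ring

theorem Matrix.skew_pow_three_of_sq_add_sq_add_sq_eq_one {R : Type*} [CommRing R] {a b c : R}
    (h : a ^ 2 + b ^ 2 + c ^ 2 = 1) :
    !![0, a, b; -a, 0, c; -b, -c, 0] ^ 3 = -!![0, a, b; -a, 0, c; -b, -c, 0] := by
  rw [skew_pow_three, h, neg_smul, one_smul]

theorem stmt_13 (r : ℝ) (hr : r ∈ Set.Ioo (0:ℝ) 1) (φ : ℝ) :
    let kx : ℝ := Real.sqrt (1 - r ^ 2)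
    let ΩL : Matrix (Fin 3) (Fin 3) ℝ := !![0, r, 0; -r, 0, kx; 0, -kx, 0]
    let ΩR : Matrix (Fin 3) (Fin 3) ℝ := !![0, r, 0; -r, 0, -kx; 0, kx, 0]
    let uL : Fin 3 → ℝ := ![kx, 0, r]
    let uR : Fin 3 → ℝ := ![-kx, 0, r]
    let RL : ℝ → Matrix (Fin 3) (Fin 3) ℝ := fun θ => NormedSpace.exp (θ • ΩL)
    let RR : ℝ → Matrix (Fin 3) (Fin 3) ℝ := fun θ => NormedSpace.exp (θ • ΩR)
    uL ⬝ᵥ (ΩR * RR (π + φ) * RL (π + φ)).mulVec uR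
      = 4 * r ^ 2 * (1 - r ^ 2) * Real.sin φ * (Real.cos φ + (2 * r ^ 2 - 1) * (1 + Real.cos φ)) ∧
    uL ⬝ᵥ (RR (π + φ) * RL (π + φ) * ΩL).mulVec uR
      = 4 * r ^ 2 * (1 - r ^ 2) * Real.sin φ * (Real.cos φ + (2 * r ^ 2 - 1) * (1 + Real.cos φ)) := by
  intro kx ΩL ΩR uL uR RL RR
  have hkx : kx ^ 2 = 1 - r ^ 2 := sq_sqrt (by nlinarith [hr.1, hr.2])
  have hL : ΩL ^ 3 = -ΩL := by
    have := skew_pow_three_of_sq_add_sq_add_sq_eq_one (a := r) (b := 0) (c := kx)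
      (by rw [hkx]; ring)
    rwa [neg_zero] at this
  have hR : ΩR ^ 3 = -ΩR := by
    have := skew_pow_three_of_sq_add_sq_add_sq_eq_one (a := r) (b := 0) (c := -kx)
      (by rw [neg_sq, hkx]; ring)
    rwa [neg_zero, neg_neg] at this
  rw [show RL (π + φ) = _ from NormedSpace.exp_pi_add_smul_of_pow_three_eq_neg hL φ,
    show RR (π + φ) = _ from NormedSpace.exp_pi_add_smul_of_pow_three_eq_neg hR φ]
  constructor <;>
    simp only [uL, uR, ΩL, ΩR, dotProduct, mulVec, Fin.sum_univ_three, pow_two, Matrix.mul_apply,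
      Matrix.add_apply, Matrix.sub_apply, Matrix.smul_apply, Matrix.one_apply, smul_eq_mul, of_apply,
      cons_val, Fin.isValue, Fin.reduceEq, ↓reduceIte] <;>
    linear_combination (8 * r ^ 4 * sin φ * cos φ + 8 * r ^ 4 * sin φ - 4 * r ^ 2 * sin φ) * hkx
end

section
/- With the setup of the appendix, for every φ ∈ ℝ: u_Rᵀ·Ω_L²·R_R(π+φ)·R_L(π+φ)·u_L = 4 r² (1-r²)(1-2r²)(1 + cos φ). -/
/-!
Both `Ω_L` and `Ω_R` are skew matrices with unit axis, so `Ω³ = -Ω` and the exponential is given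
by Rodrigues' formula `exp (θ Ω) = 1 + sin θ Ω + (1 - cos θ) Ω²` (the product
`exp (-t Ω) (1 + sin t Ω + (1 - cos t) Ω²)` has zero derivative). Since `Ω_L u_L = 0`, `R_L` fixes
`u_L`, and at `θ = π + φ` the formula for `R_R` leaves
`u_L - sin φ Ω_R u_L + (1 + cos φ) Ω_R² u_L`. Against `u_Rᵀ Ω_L²` the first two terms vanish and
the last one gives `4 r² (1 - r²) (1 - 2 r²) (1 + cos φ)`.
-/

open Matrix Real

section Rodrigues

variable {𝔸 : Type*} [NormedRing 𝔸] [NormedAlgebra ℝ 𝔸] {Ω : 𝔸}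

theorem hasDerivAt_rodrigues (hΩ : Ω * Ω * Ω = -Ω) (t : ℝ) :
    HasDerivAt (fun t : ℝ => 1 + sin t • Ω + (1 - cos t) • (Ω * Ω))
      (Ω * (1 + sin t • Ω + (1 - cos t) • (Ω * Ω))) t := by
  have hsin := (hasDerivAt_sin t).smul_const Ω
  have hcos := ((hasDerivAt_const t (1 : ℝ)).sub (hasDerivAt_cos t)).smul_const (Ω * Ω)
  refine (((hasDerivAt_const t (1 : 𝔸)).add hsin).add hcos).congr_deriv ?_
  simp only [mul_add, mul_one, mul_smul_comm, ← mul_assoc, hΩ]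
  module

theorem NormedSpace.exp_smul_eq_rodrigues [CompleteSpace 𝔸] (hΩ : Ω * Ω * Ω = -Ω) (θ : ℝ) :
    NormedSpace.exp (θ • Ω) = 1 + sin θ • Ω + (1 - cos θ) • (Ω * Ω) := by
  set G : ℝ → 𝔸 := fun t => 1 + sin t • Ω + (1 - cos t) • (Ω * Ω)
  have hderiv (t : ℝ) : HasDerivAt (fun t => NormedSpace.exp (t • -Ω) * G t) 0 t := by
    refine ((hasDerivAt_exp_smul_const (-Ω) t).mul (hasDerivAt_rodrigues hΩ t)).congr_deriv ?_
    rw [mul_assoc, ← mul_add, neg_mul, neg_add_cancel, mul_zero]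
  have hconst : NormedSpace.exp (θ • -Ω) * G θ = 1 := by
    rw [is_const_of_deriv_eq_zero (fun t => (hderiv t).differentiableAt)
      (fun t => (hderiv t).deriv) θ 0]
    simp [G, NormedSpace.exp_zero]
  have hinv : NormedSpace.exp (θ • Ω) * NormedSpace.exp (θ • -Ω) = 1 := by
    have hball (x : 𝔸) : x ∈ Metric.eball 0 (NormedSpace.expSeries ℝ 𝔸).radius := by
      simp [NormedSpace.expSeries_radius_eq_top]
    rw [smul_neg, ← NormedSpace.exp_add_of_commute_of_mem_ball (Commute.refl _).neg_right
      (hball _) (hball _), add_neg_cancel, NormedSpace.exp_zero]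
  calc NormedSpace.exp (θ • Ω)
      = NormedSpace.exp (θ • Ω) * (NormedSpace.exp (θ • -Ω) * G θ) := by rw [hconst, mul_one]
    _ = G θ := by rw [← mul_assoc, hinv, one_mul]

end Rodrigues

namespace Matrix

variable {n : Type*} [Fintype n] [DecidableEq n] {Ω : Matrix n n ℝ}

theorem exp_smul_eq_rodrigues (hΩ : Ω * Ω * Ω = -Ω) (θ : ℝ) :
    NormedSpace.exp (θ • Ω) = 1 + sin θ • Ω + (1 - cos θ) • (Ω * Ω) :=
  letI := Matrix.linftyOpNormedRing (n := n) (α := ℝ)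
  letI := Matrix.linftyOpNormedAlgebra (n := n) (R := ℝ) (α := ℝ)
  NormedSpace.exp_smul_eq_rodrigues hΩ θ

theorem exp_smul_mulVec_eq_rodrigues (hΩ : Ω * Ω * Ω = -Ω) (θ : ℝ) (v : n → ℝ) :
    NormedSpace.exp (θ • Ω) *ᵥ v = v + sin θ • Ω *ᵥ v + (1 - cos θ) • Ω *ᵥ (Ω *ᵥ v) := by
  rw [exp_smul_eq_rodrigues hΩ, add_mulVec, add_mulVec, smul_mulVec, smul_mulVec, one_mulVec,
    mulVec_mulVec]

theorem exp_smul_mulVec_eq_self (hΩ : Ω * Ω * Ω = -Ω) {v : n → ℝ} (hv : Ω *ᵥ v = 0) (θ : ℝ) :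
    NormedSpace.exp (θ • Ω) *ᵥ v = v := by
  simp only [exp_smul_mulVec_eq_rodrigues hΩ, hv, mulVec_zero, smul_zero, add_zero]

end Matrix

section SkewSymmetric

variable (x y z : ℝ)

theorem skew_mulVec_axis : !![0, x, y; -x, 0, z; -y, -z, 0] *ᵥ ![z, -y, x] = 0 := by
  ext i
  fin_cases i <;> simp only [mulVec, dotProduct, Fin.sum_univ_three, of_apply, cons_val',
    cons_val, cons_val_fin_one, Pi.zero_apply, Fin.zero_eta, Fin.mk_one, Fin.reduceFinMk,
    Fin.isValue] <;> ring

theorem skew_mul_self_mul_self :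
    !![0, x, y; -x, 0, z; -y, -z, 0] * !![0, x, y; -x, 0, z; -y, -z, 0] *
        !![0, x, y; -x, 0, z; -y, -z, 0] =
      -(x ^ 2 + y ^ 2 + z ^ 2) • !![0, x, y; -x, 0, z; -y, -z, 0] := by
  ext i j
  fin_cases i <;> fin_cases j <;> simp only [Matrix.mul_apply, Fin.sum_univ_three, of_apply,
    cons_val', cons_val, cons_val_fin_one, Matrix.smul_apply, smul_eq_mul, Fin.zero_eta, Fin.mk_one,
    Fin.reduceFinMk, Fin.isValue] <;> ring

end SkewSymmetric

theorem stmt_15 (r : ℝ) (hr : r ∈ Set.Ioo (0:ℝ) 1) (φ : ℝ) :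
    let kx : ℝ := Real.sqrt (1 - r ^ 2)
    let ΩL : Matrix (Fin 3) (Fin 3) ℝ := !![0, r, 0; -r, 0, kx; 0, -kx, 0]
    let ΩR : Matrix (Fin 3) (Fin 3) ℝ := !![0, r, 0; -r, 0, -kx; 0, kx, 0]
    let uL : Fin 3 → ℝ := ![kx, 0, r]
    let uR : Fin 3 → ℝ := ![-kx, 0, r]
    let RL : ℝ → Matrix (Fin 3) (Fin 3) ℝ := fun θ => NormedSpace.exp (θ • ΩL)
    let RR : ℝ → Matrix (Fin 3) (Fin 3) ℝ := fun θ => NormedSpace.exp (θ • ΩR)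
    uR ⬝ᵥ (ΩL * ΩL * RR (π + φ) * RL (π + φ)).mulVec uL
      = 4 * r ^ 2 * (1 - r ^ 2) * (1 - 2 * r ^ 2) * (1 + Real.cos φ) := by
  intro kx ΩL ΩR uL uR RL RR
  have hkx : kx ^ 2 = 1 - r ^ 2 := sq_sqrt (by nlinarith [hr.1, hr.2])
  have hΩL : ΩL * ΩL * ΩL = -ΩL := by
    simpa only [neg_zero, zero_pow two_ne_zero, add_zero, hkx, add_sub_cancel, neg_smul, one_smul]
      using skew_mul_self_mul_self r 0 kx
  have hΩR : ΩR * ΩR * ΩR = -ΩR := by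
    simpa only [neg_zero, neg_neg, neg_sq, zero_pow two_ne_zero, add_zero, hkx, add_sub_cancel,
      neg_smul, one_smul] using skew_mul_self_mul_self r 0 (-kx)
  have hΩLuL : ΩL *ᵥ uL = 0 := by simpa only [neg_zero] using skew_mulVec_axis r 0 kx
  -- `uR ᵥ* ΩL²` has no `e₂`-component while `ΩR *ᵥ uL` is a multiple of `e₂`
  have hw : uR ᵥ* (ΩL * ΩL) = (2 * r * kx) • ![r, 0, -kx] := by
    ext i
    fin_cases i <;> simp only [ΩL, uR, vecMul, dotProduct, Matrix.mul_apply, Fin.sum_univ_three,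
      of_apply, cons_val', cons_val, cons_val_fin_one, Pi.smul_apply, smul_eq_mul, Fin.zero_eta,
      Fin.mk_one, Fin.reduceFinMk, Fin.isValue] <;> ring
  have hv : ΩR *ᵥ uL = ![0, -2 * r * kx, 0] := by
    ext i
    fin_cases i <;> simp only [ΩR, uL, mulVec, dotProduct, Fin.sum_univ_three, of_apply,
      cons_val', cons_val, cons_val_fin_one, Fin.zero_eta, Fin.mk_one, Fin.reduceFinMk,
      Fin.isValue] <;> ring
  calc uR ⬝ᵥ (ΩL * ΩL * RR (π + φ) * RL (π + φ)) *ᵥ uL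
      = (uR ᵥ* (ΩL * ΩL)) ⬝ᵥ
          (uL + sin (π + φ) • ΩR *ᵥ uL + (1 - cos (π + φ)) • ΩR *ᵥ (ΩR *ᵥ uL)) := by
        rw [← mulVec_mulVec, Matrix.exp_smul_mulVec_eq_self hΩL hΩLuL, ← mulVec_mulVec,
          Matrix.exp_smul_mulVec_eq_rodrigues hΩR, dotProduct_mulVec]
    _ = 4 * r ^ 2 * kx ^ 2 * (kx ^ 2 - r ^ 2) * (1 + cos φ) := by
        rw [hw, hv, add_comm π, sin_add_pi, cos_add_pi]
        simp only [ΩR, uL, mulVec, dotProduct, Fin.sum_univ_three, of_apply, cons_val', cons_val,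
          cons_val_fin_one, Pi.add_apply, Pi.smul_apply, smul_eq_mul, Fin.isValue]
        ring
    _ = 4 * r ^ 2 * (1 - r ^ 2) * (1 - 2 * r ^ 2) * (1 + cos φ) := by
        rw [hkx]; ring
end
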